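/- arXiv:1106.3809 — 2 statements merged into one kernel-verified Lean document; each statement's English description precedes it below -/
import Mathlib

section
/- Let B be a column-stochastic sampling matrix with d_j > 0 for all 0 ≤ j ≤ W and J(θ) invertible. Then J(θ)⁻¹ 𝟙_W = θ and 𝟙_Wᵀ J(θ)⁻¹ 𝟙_W = 1. Consequently the correction term in the constrained Cramér–Rao bound simplifies: J(θ)⁻¹ − J(θ)⁻¹𝟙_W (𝟙_Wᵀ J(θ)⁻¹ 𝟙_W)⁻¹ 𝟙_Wᵀ J(θ)⁻¹ = J(θ)⁻¹ − θθᵀ. -/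
/-!
Because the columns of `B` sum to one and `D` inverts `d = Bθ` entrywise,
`J θ = Bᵀ D (B θ) = Bᵀ 𝟙 = 𝟙`. Hence `J⁻¹ 𝟙 = θ`, symmetry of `J` gives `𝟙ᵀ J⁻¹ = θᵀ`, and
`𝟙ᵀ θ = ∑ θ_k = 1`, so the correction term collapses to `θ θᵀ`.
-/

open Matrix

namespace Matrix

variable {m n α : Type*} [Fintype m]

lemma transpose_mulVec_one_of_sum_col_eq_one [NonAssocSemiring α] {B : Matrix m n α}
    (hB : ∀ k, ∑ j, B j k = 1) : Bᵀ *ᵥ 1 = 1 := by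
  ext k
  simpa [mulVec, dotProduct] using hB k

variable [DecidableEq m]

lemma isSymm_transpose_mul_diagonal_mul [CommSemiring α] (B : Matrix m n α) (v : m → α) :
    (Bᵀ * diagonal v * B).IsSymm := by
  simp only [IsSymm, transpose_mul, transpose_transpose, diagonal_transpose, Matrix.mul_assoc]

lemma diagonal_inv_mulVec_self [DivisionRing α] {d : m → α} (hd : ∀ j, d j ≠ 0) :
    diagonal (fun j => (d j)⁻¹) *ᵥ d = 1 := by
  ext j
  simp [mulVec_diagonal, inv_mul_cancel₀ (hd j)]

variable [Fintype n]

def fisherInformation [Field α] (B : Matrix m n α) (θ : n → α) : Matrix n n α :=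
  Bᵀ * diagonal (fun j => ((B *ᵥ θ) j)⁻¹) * B

lemma fisherInformation_mulVec_self [Field α] {B : Matrix m n α} (hB : ∀ k, ∑ j, B j k = 1)
    {θ : n → α} (hd : ∀ j, (B *ᵥ θ) j ≠ 0) : fisherInformation B θ *ᵥ θ = 1 := by
  rw [fisherInformation, ← mulVec_mulVec, ← mulVec_mulVec, diagonal_inv_mulVec_self hd,
    transpose_mulVec_one_of_sum_col_eq_one hB]

end Matrix

theorem stmt_4_general (W : ℕ)
    (θ : Fin W → ℝ) (hθsum : ∑ k, θ k = 1)
    (B : Matrix (Fin (W + 1)) (Fin W) ℝ)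
    (hBcol : ∀ k, ∑ j, B j k = 1)
    (d : Fin (W + 1) → ℝ) (hd : d = B *ᵥ θ)
    (hdpos : ∀ j, 0 < d j)
    (J : Matrix (Fin W) (Fin W) ℝ)
    (hJ : J = Bᵀ * Matrix.diagonal (fun j => (d j)⁻¹) * B)
    (hJinv : IsUnit J.det) :
    J⁻¹ *ᵥ (fun _ => (1 : ℝ)) = θ ∧
    (fun _ => (1 : ℝ)) ⬝ᵥ (J⁻¹ *ᵥ (fun _ => (1 : ℝ))) = 1 ∧
    J⁻¹ - ((fun _ => (1 : ℝ)) ⬝ᵥ (J⁻¹ *ᵥ (fun _ => (1 : ℝ))))⁻¹ •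
        Matrix.vecMulVec (J⁻¹ *ᵥ (fun _ => (1 : ℝ))) ((fun _ => (1 : ℝ)) ᵥ* J⁻¹) =
      J⁻¹ - Matrix.vecMulVec θ θ := by
  simp only [← Pi.one_def]
  subst hd
  have hJθ : J *ᵥ θ = 1 := hJ ▸ fisherInformation_mulVec_self hBcol fun j => (hdpos j).ne'
  have hinv : J⁻¹ *ᵥ 1 = θ := by
    rw [← hJθ, mulVec_mulVec, nonsing_inv_mul J hJinv, one_mulVec]
  have hvec : 1 ᵥ* J⁻¹ = θ := by
    have hsymm : J⁻¹.IsSymm := (hJ ▸ isSymm_transpose_mul_diagonal_mul B _ : J.IsSymm).inv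
    rw [← hsymm.eq, vecMul_transpose, hinv]
  have hdot : 1 ⬝ᵥ J⁻¹ *ᵥ 1 = 1 := by rw [hinv, one_dotProduct, hθsum]
  refine ⟨hinv, hdot, ?_⟩
  rw [hdot, hinv, hvec, inv_one, one_smul]

/-- For a column-stochastic sampling matrix `B` with `d_j > 0` for all
`j` and invertible `J(θ)`, one has `J(θ)⁻¹ 𝟙_W = θ` and `𝟙ᵀ J⁻¹ 𝟙 = 1`, so the
constrained CRB correction simplifies:
`J⁻¹ − J⁻¹𝟙 (𝟙ᵀJ⁻¹𝟙)⁻¹ 𝟙ᵀJ⁻¹ = J⁻¹ − θθᵀ`. -/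
theorem stmt_4 (W : ℕ) (hW : 1 ≤ W)
    (θ : Fin W → ℝ) (hθpos : ∀ k, 0 < θ k) (hθsum : ∑ k, θ k = 1)
    (B : Matrix (Fin (W + 1)) (Fin W) ℝ)
    (hBnonneg : ∀ j k, 0 ≤ B j k)
    (hBtri : ∀ (j : Fin (W + 1)) (k : Fin W), (k : ℕ) + 1 < (j : ℕ) → B j k = 0)
    (hBcol : ∀ k, ∑ j, B j k = 1)
    (d : Fin (W + 1) → ℝ) (hd : d = B *ᵥ θ)
    (hdpos : ∀ j, 0 < d j)
    (J : Matrix (Fin W) (Fin W) ℝ)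
    (hJ : J = Bᵀ * Matrix.diagonal (fun j => (d j)⁻¹) * B)
    (hJinv : IsUnit J.det) :
    J⁻¹ *ᵥ (fun _ => (1 : ℝ)) = θ ∧
    (fun _ => (1 : ℝ)) ⬝ᵥ (J⁻¹ *ᵥ (fun _ => (1 : ℝ))) = 1 ∧
    J⁻¹ - ((fun _ => (1 : ℝ)) ⬝ᵥ (J⁻¹ *ᵥ (fun _ => (1 : ℝ))))⁻¹ •
        Matrix.vecMulVec (J⁻¹ *ᵥ (fun _ => (1 : ℝ))) ((fun _ => (1 : ℝ)) ᵥ* J⁻¹) =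
      J⁻¹ - Matrix.vecMulVec θ θ :=
  stmt_4_general W θ hθsum B hBcol d hd hdpos J hJ hJinv
end

section
/- Fix W ≥ 2 and parameters p_f, p_p ∈ (0,1] with q_p = 1 − p_p. Let B̃ be the W×W upper-triangular matrix with entries B̃_{1k} = p_f·q_p^{k−1} for 1 ≤ k ≤ W, B̃_{jk} = p_f·p_p·q_p^{k−j} for 2 ≤ j ≤ k ≤ W, and B̃_{jk} = 0 for j > k (the Dual Sampling matrix). Then B̃ is invertible and its inverse is the upper-bidiagonal matrix with (B̃⁻¹)_{11} = 1/p_f, (B̃⁻¹)_{12} = −q_p/(p_f·p_p), and for 2 ≤ j ≤ W: (B̃⁻¹)_{jj} = 1/(p_f·p_p), (B̃⁻¹)_{j,j+1} = −q_p/(p_f·p_p) (when j+1 ≤ W), all other entries being 0. -/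
/-!
The Dual Sampling matrix factors as `B̃ = D * U` with `D = diag(p_f, p_f p_p, …, p_f p_p)` and
`U_{jk} = q^{k-j}` for `j ≤ k`. The geometric entries satisfy `U_{jk} - q U_{j+1,k} = δ_{jk}`, so
`U⁻¹ = 1 - q S` for the superdiagonal shift `S`, and `B̃⁻¹ = (1 - q S) D⁻¹` is upper bidiagonal.
-/

open Matrix Finset

theorem sum_range_bidiagonal_row_mul {R : Type*} [Ring R] (q : R) (f : ℕ → R) {n j : ℕ}
    (hj : j < n) :
    ∑ i ∈ range n, (if i = j then 1 else if i = j + 1 then -q else 0) * f i =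
      f j - if j + 1 < n then q * f (j + 1) else 0 := by
  have hsplit : ∀ i, (if i = j then 1 else if i = j + 1 then -q else 0) * f i =
      (if i = j then f j else 0) - (if i = j + 1 then q * f (j + 1) else 0) := by
    intro i
    split_ifs <;> first | omega | simp_all
  simp only [hsplit, sum_sub_distrib, sum_ite_eq', mem_range, if_pos hj]

theorem geom_entry_sub_mul_geom_entry_succ {R : Type*} [Ring R] (q : R) (j k : ℕ) :
    ((if j ≤ k then q ^ (k - j) else 0) - q * if j + 1 ≤ k then q ^ (k - (j + 1)) else 0) =
      if j = k then 1 else 0 := by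
  rcases lt_trichotomy j k with h | rfl | h
  · obtain ⟨m, rfl⟩ := Nat.exists_eq_add_of_lt h
    simp [show j ≠ j + m + 1 by omega, show j + m + 1 - j = m + 1 by omega,
      show j + m + 1 - (j + 1) = m by omega, pow_succ', h.le]
  · simp
  · simp [show ¬ j ≤ k by omega, show ¬ j + 1 ≤ k by omega, h.ne']

namespace Matrix

def geomUpper {R : Type*} [Ring R] (n : ℕ) (q : R) : Matrix (Fin n) (Fin n) R :=
  fun j k => if (j : ℕ) ≤ k then q ^ ((k : ℕ) - j) else 0

def geomUpperInv {R : Type*} [Ring R] (n : ℕ) (q : R) : Matrix (Fin n) (Fin n) R :=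
  fun j k => if (k : ℕ) = j then 1 else if (k : ℕ) = j + 1 then -q else 0

theorem geomUpperInv_mul_geomUpper {R : Type*} [Ring R] (n : ℕ) (q : R) :
    geomUpperInv n q * geomUpper n q = 1 := by
  ext j k
  simp only [mul_apply, one_apply, geomUpperInv, geomUpper]
  rw [Fin.sum_univ_eq_sum_range
    (fun i => (if i = j then 1 else if i = j + 1 then -q else 0) *
      if i ≤ k then q ^ ((k : ℕ) - i) else 0), sum_range_bidiagonal_row_mul q _ j.isLt]
  -- for the last row the shifted entry vanishes anyway, since `k < n = j + 1`
  have hlast : (if (j : ℕ) + 1 < n then q * (if (j : ℕ) + 1 ≤ k then q ^ ((k : ℕ) - (j + 1)) else 0)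
      else 0) = q * (if (j : ℕ) + 1 ≤ k then q ^ ((k : ℕ) - (j + 1)) else 0) := by
    split_ifs <;> first | rfl | simp | omega
  rw [hlast, geom_entry_sub_mul_geom_entry_succ]
  simp only [Fin.val_inj]

theorem geomUpperInv_mul_diagonal_inv_mul_diagonal_mul_geomUpper {K : Type*} [Field K] {n : ℕ}
    (q : K) {c : Fin n → K} (hc : ∀ i, c i ≠ 0) :
    geomUpperInv n q * diagonal c⁻¹ * (diagonal c * geomUpper n q) = 1 := by
  have hD : diagonal c⁻¹ * diagonal c = 1 := by
    rw [diagonal_mul_diagonal, ← diagonal_one]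
    exact congrArg diagonal (funext fun i => inv_mul_cancel₀ (hc i))
  rw [Matrix.mul_assoc, ← Matrix.mul_assoc (diagonal _), hD, Matrix.one_mul,
    geomUpperInv_mul_geomUpper]

end Matrix

theorem stmt_10_general (W : ℕ)
    (pf pp qp : ℝ) (hpf0 : 0 < pf) (hpp0 : 0 < pp)
    (Bt : Matrix (Fin W) (Fin W) ℝ)
    (hBt : ∀ j k : Fin W, Bt j k =
      if (j : ℕ) = 0 then pf * qp ^ (k : ℕ)
      else if (j : ℕ) ≤ (k : ℕ) then pf * pp * qp ^ ((k : ℕ) - (j : ℕ))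
      else 0) :
    IsUnit Bt.det ∧
    ∀ j k : Fin W, Bt⁻¹ j k =
      if (k : ℕ) = (j : ℕ) then (if (j : ℕ) = 0 then pf⁻¹ else (pf * pp)⁻¹)
      else if (k : ℕ) = (j : ℕ) + 1 then -qp / (pf * pp)
      else 0 := by
  set c : Fin W → ℝ := fun j => if (j : ℕ) = 0 then pf else pf * pp
  have hc : ∀ j, c j ≠ 0 := fun j => by positivity
  have hBt_eq : Bt = diagonal c * geomUpper W qp := by
    ext j k
    rw [hBt, diagonal_mul, geomUpper]
    by_cases hj : (j : ℕ) = 0 <;> simp [c, hj]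
  have hL := geomUpperInv_mul_diagonal_inv_mul_diagonal_mul_geomUpper qp hc
  rw [← hBt_eq] at hL
  refine ⟨isUnit_det_of_left_inverse hL, fun j k => ?_⟩
  rw [inv_eq_left_inv hL, mul_diagonal, geomUpperInv]
  split_ifs <;> simp_all [c, div_eq_mul_inv]

/-- The Dual Sampling (DS) matrix `B̃` with first row
`B̃_{1k} = p_f q_p^{k−1}` and entries `B̃_{jk} = p_f p_p q_p^{k−j}` for
`2 ≤ j ≤ k ≤ W` (zero below the diagonal) is invertible; its inverse is
upper-bidiagonal with `(B̃⁻¹)_{11} = 1/p_f`, `(B̃⁻¹)_{jj} = 1/(p_f p_p)` for `j ≥ 2`,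
`(B̃⁻¹)_{j,j+1} = −q_p/(p_f p_p)`, and all other entries zero.
Lean index `j : Fin W` corresponds to size `j+1`. -/
theorem stmt_10 (W : ℕ) (hW : 2 ≤ W)
    (pf pp qp : ℝ) (hpf0 : 0 < pf) (hpf1 : pf ≤ 1) (hpp0 : 0 < pp) (hpp1 : pp ≤ 1)
    (hqp : qp = 1 - pp)
    (Bt : Matrix (Fin W) (Fin W) ℝ)
    (hBt : ∀ j k : Fin W, Bt j k =
      if (j : ℕ) = 0 then pf * qp ^ (k : ℕ)
      else if (j : ℕ) ≤ (k : ℕ) then pf * pp * qp ^ ((k : ℕ) - (j : ℕ))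
      else 0) :
    IsUnit Bt.det ∧
    ∀ j k : Fin W, Bt⁻¹ j k =
      if (k : ℕ) = (j : ℕ) then (if (j : ℕ) = 0 then pf⁻¹ else (pf * pp)⁻¹)
      else if (k : ℕ) = (j : ℕ) + 1 then -qp / (pf * pp)
      else 0 :=
  stmt_10_general W pf pp qp hpf0 hpp0 Bt hBt
end
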